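/- arXiv:1607.08067 — 2 statements merged into one kernel-verified Lean document; each statement's English description precedes it below -/
import Mathlib

section
/- If a connected graph H contains the star K_{1,4} as a subgraph but contains no path on 15 vertices as a subgraph, then H contains a vertex of degree greater than (v(H)/2)^(1/7), where v(H) is the number of vertices of H. -/
/-!
A longest path `p` of `H` has at most 13 edges, and every vertex lies within distance
`⌈|p| / 2⌉ ≤ 7` of the middle vertex of `p`. The Moore bound then gives
`v(H) ≤ 1 + Δ + ⋯ + Δ⁷ < 2Δ⁷`, where the maximum degree `Δ` is at least `2` because `H`
contains `K_{1,4}`.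
-/

/-- `G` contains a (not necessarily induced) subgraph isomorphic to `F`. -/
def Contains {α β : Type*} (F : SimpleGraph α) (G : SimpleGraph β) : Prop :=
  ∃ f : F →g G, Function.Injective f

/-- The star graph `K_{1,s}`: vertex `0` is the center, adjacent to the `s` leaves. -/
def starGraph (s : ℕ) : SimpleGraph (Fin (s + 1)) :=
  SimpleGraph.fromRel (fun a _ => a = 0)

namespace SimpleGraph

open Finset

variable {V : Type*} {G : SimpleGraph V}

theorem contains_iff_isContained {α : Type*} {F : SimpleGraph α} : Contains F G ↔ F ⊑ G :=
  ⟨fun ⟨f, hf⟩ => ⟨f.toCopy hf⟩, fun ⟨f⟩ => ⟨f.toHom, f.injective⟩⟩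

theorem exists_le_degree_of_contains_starGraph [Fintype V] [DecidableRel G.Adj] {s : ℕ}
    (h : Contains (_root_.starGraph s) G) : ∃ v, s ≤ G.degree v := by
  obtain ⟨f, hf⟩ := h
  refine ⟨f 0, ?_⟩
  have hleaf (i : Fin s) : f i.succ ∈ G.neighborFinset (f 0) := by
    rw [mem_neighborFinset]
    exact f.map_adj (by simp [_root_.starGraph, (Fin.succ_ne_zero i).symm])
  simpa using card_le_card_of_injOn (s := univ) (fun i : Fin s => f i.succ)
    (fun i _ => hleaf i) (fun i _ j _ hij => Fin.succ_injective _ (hf hij))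

namespace Walk

variable {u v w : V}

theorem IsPath.length_lt_of_not_contains_pathGraph {n : ℕ} {p : G.Walk u v} (hp : p.IsPath)
    (h : ¬ Contains (pathGraph (n + 1)) G) : p.length < n := by
  by_contra! hn
  have hlen : (p.take n).length = n := by simp [hn]
  exact h (contains_iff_isContained.mpr (hlen ▸ (hp.take n).isContained_pathGraph))

theorem dist_getVert_le (p : G.Walk u v) {i j : ℕ} (hij : i ≤ j) :
    G.dist (p.getVert i) (p.getVert j) ≤ j - i := by
  have h := dist_le ((p.drop i).take (j - i))
  rw [take_length, drop_getVert, Nat.add_sub_cancel' hij] at h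
  exact h.trans (min_le_left _ _)

theorem dist_add_dist_le_length (p : G.Walk u w) (hv : v ∈ p.support) :
    G.dist u v + G.dist v w ≤ p.length := by
  classical
  rw [← congrArg length (p.take_spec hv), length_append]
  exact add_le_add (dist_le _) (dist_le _)

theorem IsPath.append_of_support_inter {p : G.Walk u v} {q : G.Walk v w}
    (hp : p.IsPath) (hq : q.IsPath) (h : ∀ x ∈ p.support, x ∈ q.support → x = v) :
    (p.append q).IsPath := by
  rw [isPath_def, support_append]
  refine hp.support_nodup.append hq.support_nodup.tail fun x hxp hxq => ?_
  have hnd := hq.support_nodup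
  rw [← cons_tail_support, List.nodup_cons] at hnd
  exact hnd.1 (h x hxp (List.mem_of_mem_tail hxq) ▸ hxq)

end Walk

open Walk

theorem exists_isPath_forall_length_le [Finite V] [Nonempty V] (G : SimpleGraph V) :
    ∃ (a b : V) (p : G.Walk a b), p.IsPath ∧
      ∀ (a' b' : V) (q : G.Walk a' b'), q.IsPath → q.length ≤ p.length := by
  have := Fintype.ofFinite V
  set S := {n | ∃ (a b : V) (p : G.Walk a b), p.IsPath ∧ p.length = n}
  have hne : S.Nonempty := ⟨0, Classical.arbitrary V, _, .nil, IsPath.nil, rfl⟩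
  have hbdd : BddAbove S := ⟨Fintype.card V, by
    rintro _ ⟨a, b, p, hp, rfl⟩
    exact hp.length_lt.le⟩
  obtain ⟨a, b, p, hp, hlen⟩ := Nat.sSup_mem hne hbdd
  exact ⟨a, b, p, hp, fun a' b' q hq => hlen ▸ le_csSup hbdd ⟨a', b', q, hq, rfl⟩⟩

variable {a b : V} {p : G.Walk a b}

/-- A shortest path from `u` to the vertex `x` of `p` nearest to `u` meets `p` only in `x`,
so it extends by either part of `p` at `x` to a path; maximality of `p` bounds both. -/
theorem Connected.exists_getVert_dist_le_min (hconn : G.Connected) (hp : p.IsPath)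
    (hmax : ∀ (a' b' : V) (q : G.Walk a' b'), q.IsPath → q.length ≤ p.length) (u : V) :
    ∃ i ≤ p.length, G.dist u (p.getVert i) ≤ min i (p.length - i) := by
  obtain ⟨i, hi, hmin⟩ := (Finset.range (p.length + 1)).exists_min_image
    (fun j => G.dist u (p.getVert j)) Finset.nonempty_range_add_one
  rw [Finset.mem_range, Nat.lt_succ_iff] at hi
  obtain ⟨q, hq, hqlen⟩ := hconn.exists_path_of_dist u (p.getVert i)
  have hmeet : ∀ y ∈ q.support, y ∈ p.support → y = p.getVert i := by
    intro y hyq hyp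
    obtain ⟨j, rfl, hj⟩ := mem_support_iff_exists_getVert.mp hyp
    have hle := hmin j (Finset.mem_range.mpr (Nat.lt_succ_of_le hj))
    have := q.dist_add_dist_le_length hyq
    exact hconn.dist_eq_zero_iff.mp (by omega)
  have hdrop := hmax _ _ _ <| hq.append_of_support_inter (hp.drop i) fun y hyq hyd =>
    hmeet y hyq ((p.isSubwalk_drop i).support_subset hyd)
  have htake := hmax _ _ _ <| hq.append_of_support_inter (hp.take i).reverse fun y hyq hyt =>
    hmeet y hyq ((p.isSubwalk_take i).support_subset (by simpa using hyt))
  simp only [length_append, drop_length, length_reverse, take_length] at hdrop htake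
  exact ⟨i, hi, by omega⟩

theorem Connected.dist_getVert_le_max (hconn : G.Connected) (hp : p.IsPath)
    (hmax : ∀ (a' b' : V) (q : G.Walk a' b'), q.IsPath → q.length ≤ p.length)
    (c : ℕ) (u : V) :
    G.dist (p.getVert c) u ≤ max c (p.length - c) := by
  obtain ⟨i, hi, hu⟩ := hconn.exists_getVert_dist_le_min hp hmax u
  have htri : G.dist (p.getVert c) u ≤
      G.dist (p.getVert c) (p.getVert i) + G.dist u (p.getVert i) :=
    dist_comm (u := u) (v := p.getVert i) ▸ hconn.dist_triangle
  rcases le_total i c with hic | hci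
  · have := p.dist_getVert_le hic
    rw [dist_comm] at this
    omega
  · have := p.dist_getVert_le hci
    omega

theorem exists_adj_dist_eq_of_dist_eq_add_one {c u : V} {d : ℕ} (h : G.dist c u = d + 1) :
    ∃ w, G.dist c w = d ∧ G.Adj w u := by
  obtain ⟨p, hp⟩ := exists_walk_of_dist_ne_zero (by omega : G.dist c u ≠ 0)
  have hlen : p.length = d + 1 := hp.trans h
  have hadj : G.Adj (p.getVert d) u := by
    simpa [← hlen] using p.adj_getVert_succ (i := d) (by omega)
  have hle : G.dist c (p.getVert d) ≤ d := by
    simpa using p.dist_getVert_le (Nat.zero_le d)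
  have := hadj.reachable.dist_triangle_right c
  rw [dist_eq_one_iff_adj.mpr hadj] at this
  exact ⟨_, by omega, hadj⟩

theorem Connected.card_filter_dist_eq_le [Fintype V] [DecidableRel G.Adj] (hconn : G.Connected)
    (c : V) (d : ℕ) : #{u | G.dist c u = d} ≤ G.maxDegree ^ d := by
  classical
  induction d with
  | zero =>
    calc #{u | G.dist c u = 0} ≤ #{c} :=
          card_le_card fun u hu => by simp_all [hconn.dist_eq_zero_iff]
      _ = G.maxDegree ^ 0 := by simp
  | succ d ih =>
    have hsub : ({u | G.dist c u = d + 1} : Finset V) ⊆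
        ({u | G.dist c u = d} : Finset V).biUnion (G.neighborFinset ·) := fun u hu => by
      obtain ⟨w, hw, hadj⟩ := exists_adj_dist_eq_of_dist_eq_add_one (by simpa using hu)
      exact mem_biUnion.mpr ⟨w, by simpa using hw, (mem_neighborFinset _ _ _).mpr hadj⟩
    calc #{u | G.dist c u = d + 1}
        ≤ #{u | G.dist c u = d} * G.maxDegree :=
          (card_le_card hsub).trans
            (card_biUnion_le_card_mul _ _ _ fun w _ => G.degree_le_maxDegree w)
      _ ≤ G.maxDegree ^ d * G.maxDegree := Nat.mul_le_mul_right _ ih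
      _ = G.maxDegree ^ (d + 1) := (pow_succ _ _).symm

theorem Connected.card_le_sum_maxDegree_pow [Fintype V] [DecidableRel G.Adj]
    (hconn : G.Connected) {c : V} {r : ℕ} (hr : ∀ u, G.dist c u ≤ r) :
    Fintype.card V ≤ ∑ d ∈ range (r + 1), G.maxDegree ^ d := by
  classical
  calc Fintype.card V = #(univ : Finset V) := rfl
    _ ≤ #((range (r + 1)).biUnion fun d => {u | G.dist c u = d}) :=
      card_le_card fun u _ =>
        mem_biUnion.mpr ⟨G.dist c u, mem_range.mpr (Nat.lt_succ_of_le (hr u)), by simp⟩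
    _ ≤ ∑ d ∈ range (r + 1), #{u | G.dist c u = d} := card_biUnion_le
    _ ≤ ∑ d ∈ range (r + 1), G.maxDegree ^ d :=
      sum_le_sum fun d _ => hconn.card_filter_dist_eq_le c d

end SimpleGraph

theorem Nat.sum_range_succ_pow_lt_two_mul_pow {m : ℕ} (hm : 2 ≤ m) (n : ℕ) :
    ∑ k ∈ Finset.range (n + 1), m ^ k < 2 * m ^ n := by
  rw [Finset.sum_range_succ, two_mul]
  exact Nat.add_lt_add_right (Nat.geomSum_lt hm fun k hk => Finset.mem_range.mp hk) _

theorem Real.rpow_inv_natCast_lt_of_lt_pow {x y : ℝ} {n : ℕ} (hx : 0 ≤ x) (hy : 0 ≤ y)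
    (hn : n ≠ 0) (h : x < y ^ n) : x ^ (n⁻¹ : ℝ) < y := by
  rw [Real.rpow_inv_lt_iff_of_pos hx hy (by positivity), Real.rpow_natCast]
  exact h

/-- A connected graph containing `K_{1,4}` but no path on 15 vertices has a
vertex of degree greater than `(v(H)/2)^(1/7)`. -/
theorem exists_large_degree {V : Type} [Fintype V] (H : SimpleGraph V) [DecidableRel H.Adj]
    (hconn : H.Connected)
    (hstar : Contains (starGraph 4) H)
    (hpath : ¬ Contains (SimpleGraph.pathGraph 15) H) :
    ∃ v : V, ((Fintype.card V : ℝ) / 2) ^ ((1 : ℝ) / 7) < (H.degree v : ℝ) := by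
  have := hconn.nonempty
  obtain ⟨a, b, p, hp, hmax⟩ := H.exists_isPath_forall_length_le
  have hlen : p.length < 14 := hp.length_lt_of_not_contains_pathGraph hpath
  have hradius (u : V) : H.dist (p.getVert (p.length / 2)) u ≤ 7 :=
    (hconn.dist_getVert_le_max hp hmax _ u).trans (by omega)
  have hΔ : 2 ≤ H.maxDegree := by
    obtain ⟨w, hw⟩ := SimpleGraph.exists_le_degree_of_contains_starGraph hstar
    have := H.degree_le_maxDegree w
    omega
  have hcard : Fintype.card V < 2 * H.maxDegree ^ 7 :=
    (hconn.card_le_sum_maxDegree_pow hradius).trans_lt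
      (Nat.sum_range_succ_pow_lt_two_mul_pow hΔ 7)
  obtain ⟨v, hv⟩ := H.exists_maximal_degree_vertex
  have hcard' : (Fintype.card V : ℝ) / 2 < (H.degree v : ℝ) ^ 7 := by
    rw [div_lt_iff₀ two_pos, ← hv]
    exact_mod_cast (by linarith : Fintype.card V < H.maxDegree ^ 7 * 2)
  refine ⟨v, ?_⟩
  rw [one_div]
  exact_mod_cast
    Real.rpow_inv_natCast_lt_of_lt_pow (by positivity) (by positivity) (by norm_num) hcard'
end

section
/- If a connected graph H contains the star K_{1,4} as a subgraph but does not contain the sparkler S_{4,4} as a subgraph, then H contains no path on 15 vertices as a subgraph. -/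
/-- The sparkler graph `S_{a,b}` on `a + b` vertices: vertex `0` is the center of a
star `K_{1,a-1}` with leaves `1, …, a-1`, and a path `a, a+1, …, a+b-1` is attached
to the center by the edge `{0, a}`. -/
def sparkler (a b : ℕ) : SimpleGraph (Fin (a + b)) :=
  SimpleGraph.fromRel
    (fun i j => (i.val = 0 ∧ 1 ≤ j.val ∧ j.val ≤ a) ∨ (a ≤ i.val ∧ j.val = i.val + 1))

private def spmap {V : Type} (c l1 l2 l3 p1 p2 p3 p4 : V) : Fin 8 → V :=
  fun i => match i with
  | 0 => c | 1 => l1 | 2 => l2 | 3 => l3 | 4 => p1 | 5 => p2 | 6 => p3 | 7 => p4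

section Aux
variable {V : Type} (H : SimpleGraph V)

set_option maxHeartbeats 3200000 in
lemma contains_sparkler (c l1 l2 l3 p1 p2 p3 p4 : V)
    (hl1 : H.Adj c l1) (hl2 : H.Adj c l2) (hl3 : H.Adj c l3)
    (hp1 : H.Adj c p1) (hp12 : H.Adj p1 p2) (hp23 : H.Adj p2 p3) (hp34 : H.Adj p3 p4)
    (e12 : l1 ≠ l2) (e13 : l1 ≠ l3) (e23 : l2 ≠ l3)
    (e1p1 : l1 ≠ p1) (e1p2 : l1 ≠ p2) (e1p3 : l1 ≠ p3) (e1p4 : l1 ≠ p4)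
    (e2p1 : l2 ≠ p1) (e2p2 : l2 ≠ p2) (e2p3 : l2 ≠ p3) (e2p4 : l2 ≠ p4)
    (e3p1 : l3 ≠ p1) (e3p2 : l3 ≠ p2) (e3p3 : l3 ≠ p3) (e3p4 : l3 ≠ p4)
    (ep12 : p1 ≠ p2) (ep13 : p1 ≠ p3) (ep14 : p1 ≠ p4)
    (ep23 : p2 ≠ p3) (ep24 : p2 ≠ p4) (ep34 : p3 ≠ p4)
    (ecp1 : c ≠ p1) (ecp2 : c ≠ p2) (ecp3 : c ≠ p3) (ecp4 : c ≠ p4) :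
    Contains (sparkler 4 4) H := by
  classical
  have ecl1 : c ≠ l1 := H.ne_of_adj hl1
  have ecl2 : c ≠ l2 := H.ne_of_adj hl2
  have ecl3 : c ≠ l3 := H.ne_of_adj hl3
  refine ⟨⟨spmap c l1 l2 l3 p1 p2 p3 p4, ?_⟩, ?_⟩
  · intro a b hab
    have hab' : a ≠ b ∧ (((a:ℕ) = 0 ∧ 1 ≤ (b:ℕ) ∧ (b:ℕ) ≤ 4) ∨ (4 ≤ (a:ℕ) ∧ (b:ℕ) = (a:ℕ) + 1)
        ∨ ((b:ℕ) = 0 ∧ 1 ≤ (a:ℕ) ∧ (a:ℕ) ≤ 4) ∨ (4 ≤ (b:ℕ) ∧ (a:ℕ) = (b:ℕ) + 1)) := by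
      rw [sparkler, SimpleGraph.fromRel_adj] at hab
      tauto
    clear hab
    obtain ⟨hne, hrel⟩ := hab'
    fin_cases a <;> fin_cases b <;> simp only [Fin.isValue, Fin.mk_zero, Fin.mk_one] at hne hrel ⊢ <;>
      first
      | omega
      | (exfalso; exact hne rfl)
      | exact hl1 | exact hl2 | exact hl3 | exact hp1 | exact hp12 | exact hp23 | exact hp34
      | exact hl1.symm | exact hl2.symm | exact hl3.symm | exact hp1.symm
      | exact hp12.symm | exact hp23.symm | exact hp34.symm
  · have h8 : ∀ i : Fin 8, (fun x => if x = c then (0:Fin 8) else if x = l1 then 1 else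
        if x = l2 then 2 else if x = l3 then 3 else if x = p1 then 4 else
        if x = p2 then 5 else if x = p3 then 6 else 7) (spmap c l1 l2 l3 p1 p2 p3 p4 i) = i := by
      intro i
      fin_cases i <;>
        simp [spmap, ecl1.symm, ecl2.symm, ecl3.symm, ecp1.symm, ecp2.symm, ecp3.symm, ecp4.symm,
          e12.symm, e13.symm, e23.symm, e1p1.symm, e1p2.symm, e1p3.symm, e1p4.symm,
          e2p1.symm, e2p2.symm, e2p3.symm, e2p4.symm, e3p1.symm, e3p2.symm, e3p3.symm, e3p4.symm,
          ep12.symm, ep13.symm, ep14.symm, ep23.symm, ep24.symm, ep34.symm, Fin.ext_iff]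
    intro a b hab
    have ha := h8 a
    have hb := h8 b
    rw [show spmap c l1 l2 l3 p1 p2 p3 p4 a = spmap c l1 l2 l3 p1 p2 p3 p4 b from hab] at ha
    exact ha.symm.trans hb

/-- Type-1 leaf: an attached 4-path whose last three vertices are non-neighbors of `c`. -/
lemma sparkler_of_nonadj_tail (c n1 n2 n3 n4 p1 p2 p3 p4 : V)
    (hn1 : H.Adj c n1) (hn2 : H.Adj c n2) (hn3 : H.Adj c n3) (hn4 : H.Adj c n4)
    (d12 : n1 ≠ n2) (d13 : n1 ≠ n3) (d14 : n1 ≠ n4)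
    (d23 : n2 ≠ n3) (d24 : n2 ≠ n4) (d34 : n3 ≠ n4)
    (hp1 : H.Adj c p1) (hp12 : H.Adj p1 p2) (hp23 : H.Adj p2 p3) (hp34 : H.Adj p3 p4)
    (ep12 : p1 ≠ p2) (ep13 : p1 ≠ p3) (ep14 : p1 ≠ p4)
    (ep23 : p2 ≠ p3) (ep24 : p2 ≠ p4) (ep34 : p3 ≠ p4)
    (ecp1 : c ≠ p1) (ecp2 : c ≠ p2) (ecp3 : c ≠ p3) (ecp4 : c ≠ p4)
    (na2 : ¬ H.Adj c p2) (na3 : ¬ H.Adj c p3) (na4 : ¬ H.Adj c p4) :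
    Contains (sparkler 4 4) H := by
  have k12 : n1 ≠ p2 := fun h => na2 (h ▸ hn1)
  have k13 : n1 ≠ p3 := fun h => na3 (h ▸ hn1)
  have k14 : n1 ≠ p4 := fun h => na4 (h ▸ hn1)
  have k22 : n2 ≠ p2 := fun h => na2 (h ▸ hn2)
  have k23 : n2 ≠ p3 := fun h => na3 (h ▸ hn2)
  have k24 : n2 ≠ p4 := fun h => na4 (h ▸ hn2)
  have k32 : n3 ≠ p2 := fun h => na2 (h ▸ hn3)
  have k33 : n3 ≠ p3 := fun h => na3 (h ▸ hn3)
  have k34 : n3 ≠ p4 := fun h => na4 (h ▸ hn3)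
  have k42 : n4 ≠ p2 := fun h => na2 (h ▸ hn4)
  have k43 : n4 ≠ p3 := fun h => na3 (h ▸ hn4)
  have k44 : n4 ≠ p4 := fun h => na4 (h ▸ hn4)
  by_cases e1 : n1 = p1
  · exact contains_sparkler H c n2 n3 n4 p1 p2 p3 p4 hn2 hn3 hn4 hp1 hp12 hp23 hp34
      d23 d24 d34 (fun h => d12 (e1.trans h.symm)) k22 k23 k24 (fun h => d13 (e1.trans h.symm))
      k32 k33 k34 (fun h => d14 (e1.trans h.symm)) k42 k43 k44
      ep12 ep13 ep14 ep23 ep24 ep34 ecp1 ecp2 ecp3 ecp4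
  by_cases e2 : n2 = p1
  · exact contains_sparkler H c n1 n3 n4 p1 p2 p3 p4 hn1 hn3 hn4 hp1 hp12 hp23 hp34
      d13 d14 d34 (fun h => d12 (h.trans e2.symm)) k12 k13 k14 (fun h => d23 (e2.trans h.symm))
      k32 k33 k34 (fun h => d24 (e2.trans h.symm)) k42 k43 k44
      ep12 ep13 ep14 ep23 ep24 ep34 ecp1 ecp2 ecp3 ecp4
  by_cases e3 : n3 = p1
  · exact contains_sparkler H c n1 n2 n4 p1 p2 p3 p4 hn1 hn2 hn4 hp1 hp12 hp23 hp34
      d12 d14 d24 (fun h => d13 (h.trans e3.symm)) k12 k13 k14 (fun h => d23 (h.trans e3.symm))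
      k22 k23 k24 (fun h => d34 (e3.trans h.symm)) k42 k43 k44
      ep12 ep13 ep14 ep23 ep24 ep34 ecp1 ecp2 ecp3 ecp4
  · exact contains_sparkler H c n1 n2 n3 p1 p2 p3 p4 hn1 hn2 hn3 hp1 hp12 hp23 hp34
      d12 d13 d23 e1 k12 k13 k14 e2 k22 k23 k24
      e3 k32 k33 k34 ep12 ep13 ep14 ep23 ep24 ep34 ecp1 ecp2 ecp3 ecp4
end Aux
section Core
variable {V : Type} (H : SimpleGraph V)
lemma core (c : V) (vv : ℕ → V) (n1 n2 n3 n4 : V)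
    (hn1 : H.Adj c n1) (hn2 : H.Adj c n2) (hn3 : H.Adj c n3) (hn4 : H.Adj c n4)
    (d12 : n1 ≠ n2) (d13 : n1 ≠ n3) (d14 : n1 ≠ n4)
    (d23 : n2 ≠ n3) (d24 : n2 ≠ n4) (d34 : n3 ≠ n4)
    (hvinj : ∀ p q, p ≤ 14 → q ≤ 14 → vv p = vv q → p = q)
    (hvadj : ∀ p, p + 1 ≤ 14 → H.Adj (vv p) (vv (p + 1)))
    (hcvL : ∀ p, p ≤ 14 → vv p = c → 1 ≤ p → H.Adj c (vv (p - 1)))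
    (hcvR : ∀ p, p ≤ 14 → vv p = c → p + 1 ≤ 14 → H.Adj c (vv (p + 1)))
    (hex : ∃ k, k ≤ 14 ∧ H.Adj c (vv k)) :
    Contains (sparkler 4 4) H := by
  classical
  set Kf : Finset ℕ := (Finset.range 15).filter (fun p => H.Adj c (vv p)) with hKfdef
  have hmem : ∀ p, p ∈ Kf ↔ p ≤ 14 ∧ H.Adj c (vv p) := by
    intro p
    simp only [hKfdef, Finset.mem_filter, Finset.mem_range]
    constructor
    · rintro ⟨h1, h2⟩; exact ⟨by omega, h2⟩
    · rintro ⟨h1, h2⟩; exact ⟨by omega, h2⟩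
  have hvne : ∀ p q, p ≤ 14 → q ≤ 14 → p ≠ q → vv p ≠ vv q :=
    fun p q hp hq hne h => hne (hvinj p q hp hq h)
  have hKne : Kf.Nonempty := by
    obtain ⟨k, hk1, hk2⟩ := hex
    exact ⟨k, (hmem k).mpr ⟨hk1, hk2⟩⟩
  -- Type-1 ascending window
  have T1asc : ∀ a, a ∈ Kf → a + 3 ≤ 14 →
      (∀ q, a + 1 ≤ q → q ≤ a + 3 → ¬ H.Adj c (vv q)) →
      (∀ q, a + 1 ≤ q → q ≤ a + 3 → vv q ≠ c) →
      Contains (sparkler 4 4) H := by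
    intro a haK h3 hna hnc
    obtain ⟨ha14, haadj⟩ := (hmem a).mp haK
    exact sparkler_of_nonadj_tail H c n1 n2 n3 n4 (vv a) (vv (a+1)) (vv (a+2)) (vv (a+3))
      hn1 hn2 hn3 hn4 d12 d13 d14 d23 d24 d34
      haadj (hvadj a (by omega))
      (by have := hvadj (a+1) (by omega); rwa [show a+1+1 = a+2 by omega] at this)
      (by have := hvadj (a+2) (by omega); rwa [show a+2+1 = a+3 by omega] at this)
      (hvne a (a+1) (by omega) (by omega) (by omega))
      (hvne a (a+2) (by omega) (by omega) (by omega))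
      (hvne a (a+3) (by omega) (by omega) (by omega))
      (hvne (a+1) (a+2) (by omega) (by omega) (by omega))
      (hvne (a+1) (a+3) (by omega) (by omega) (by omega))
      (hvne (a+2) (a+3) (by omega) (by omega) (by omega))
      (H.ne_of_adj haadj)
      (hnc (a+1) (by omega) (by omega)).symm
      (hnc (a+2) (by omega) (by omega)).symm
      (hnc (a+3) (by omega) (by omega)).symm
      (hna (a+1) (by omega) (by omega))
      (hna (a+2) (by omega) (by omega))
      (hna (a+3) (by omega) (by omega))
  -- Type-1 descending window
  have T1desc : ∀ a, a ∈ Kf → 3 ≤ a →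
      (∀ q, a - 3 ≤ q → q + 1 ≤ a → ¬ H.Adj c (vv q)) →
      (∀ q, a - 3 ≤ q → q + 1 ≤ a → vv q ≠ c) →
      Contains (sparkler 4 4) H := by
    intro a haK h3 hna hnc
    obtain ⟨ha14, haadj⟩ := (hmem a).mp haK
    exact sparkler_of_nonadj_tail H c n1 n2 n3 n4 (vv a) (vv (a-1)) (vv (a-2)) (vv (a-3))
      hn1 hn2 hn3 hn4 d12 d13 d14 d23 d24 d34
      haadj
      (by have := hvadj (a-1) (by omega); rw [show a-1+1 = a by omega] at this; exact this.symm)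
      (by have := hvadj (a-2) (by omega); rw [show a-2+1 = a-1 by omega] at this; exact this.symm)
      (by have := hvadj (a-3) (by omega); rw [show a-3+1 = a-2 by omega] at this; exact this.symm)
      (hvne a (a-1) (by omega) (by omega) (by omega))
      (hvne a (a-2) (by omega) (by omega) (by omega))
      (hvne a (a-3) (by omega) (by omega) (by omega))
      (hvne (a-1) (a-2) (by omega) (by omega) (by omega))
      (hvne (a-1) (a-3) (by omega) (by omega) (by omega))
      (hvne (a-2) (a-3) (by omega) (by omega) (by omega))
      (H.ne_of_adj haadj)
      (hnc (a-1) (by omega) (by omega)).symm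
      (hnc (a-2) (by omega) (by omega)).symm
      (hnc (a-3) (by omega) (by omega)).symm
      (hna (a-1) (by omega) (by omega))
      (hna (a-2) (by omega) (by omega))
      (hna (a-3) (by omega) (by omega))
  -- Type-2 ascending window with three explicit outside leaves
  have T2asc : ∀ a x1 x2 x3, a ∈ Kf → a + 3 ≤ 14 →
      x1 ∈ Kf → x2 ∈ Kf → x3 ∈ Kf → x1 ≠ x2 → x1 ≠ x3 → x2 ≠ x3 →
      (x1 + 1 ≤ a ∨ a + 4 ≤ x1) → (x2 + 1 ≤ a ∨ a + 4 ≤ x2) → (x3 + 1 ≤ a ∨ a + 4 ≤ x3) →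
      (∀ q, a + 1 ≤ q → q ≤ a + 3 → vv q ≠ c) →
      Contains (sparkler 4 4) H := by
    intro a x1 x2 x3 haK h3 h1K h2K h3K e12 e13 e23 o1 o2 o3 hnc
    obtain ⟨ha14, haadj⟩ := (hmem a).mp haK
    obtain ⟨hx1a, hx1adj⟩ := (hmem x1).mp h1K
    obtain ⟨hx2a, hx2adj⟩ := (hmem x2).mp h2K
    obtain ⟨hx3a, hx3adj⟩ := (hmem x3).mp h3K
    exact contains_sparkler H c (vv x1) (vv x2) (vv x3) (vv a) (vv (a+1)) (vv (a+2)) (vv (a+3))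
      hx1adj hx2adj hx3adj haadj (hvadj a (by omega))
      (by have := hvadj (a+1) (by omega); rwa [show a+1+1 = a+2 by omega] at this)
      (by have := hvadj (a+2) (by omega); rwa [show a+2+1 = a+3 by omega] at this)
      (hvne x1 x2 (by omega) (by omega) (by omega))
      (hvne x1 x3 (by omega) (by omega) (by omega))
      (hvne x2 x3 (by omega) (by omega) (by omega))
      (hvne x1 a (by omega) (by omega) (by omega))
      (hvne x1 (a+1) (by omega) (by omega) (by omega))
      (hvne x1 (a+2) (by omega) (by omega) (by omega))
      (hvne x1 (a+3) (by omega) (by omega) (by omega))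
      (hvne x2 a (by omega) (by omega) (by omega))
      (hvne x2 (a+1) (by omega) (by omega) (by omega))
      (hvne x2 (a+2) (by omega) (by omega) (by omega))
      (hvne x2 (a+3) (by omega) (by omega) (by omega))
      (hvne x3 a (by omega) (by omega) (by omega))
      (hvne x3 (a+1) (by omega) (by omega) (by omega))
      (hvne x3 (a+2) (by omega) (by omega) (by omega))
      (hvne x3 (a+3) (by omega) (by omega) (by omega))
      (hvne a (a+1) (by omega) (by omega) (by omega))
      (hvne a (a+2) (by omega) (by omega) (by omega))
      (hvne a (a+3) (by omega) (by omega) (by omega))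
      (hvne (a+1) (a+2) (by omega) (by omega) (by omega))
      (hvne (a+1) (a+3) (by omega) (by omega) (by omega))
      (hvne (a+2) (a+3) (by omega) (by omega) (by omega))
      (H.ne_of_adj haadj)
      (hnc (a+1) (by omega) (by omega)).symm
      (hnc (a+2) (by omega) (by omega)).symm
      (hnc (a+3) (by omega) (by omega)).symm
  -- Type-2 descending window with three explicit outside leaves
  have T2desc : ∀ a x1 x2 x3, a ∈ Kf → 3 ≤ a →
      x1 ∈ Kf → x2 ∈ Kf → x3 ∈ Kf → x1 ≠ x2 → x1 ≠ x3 → x2 ≠ x3 →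
      (x1 + 4 ≤ a ∨ a + 1 ≤ x1) → (x2 + 4 ≤ a ∨ a + 1 ≤ x2) → (x3 + 4 ≤ a ∨ a + 1 ≤ x3) →
      (∀ q, a - 3 ≤ q → q + 1 ≤ a → vv q ≠ c) →
      Contains (sparkler 4 4) H := by
    intro a x1 x2 x3 haK h3 h1K h2K h3K e12 e13 e23 o1 o2 o3 hnc
    obtain ⟨ha14, haadj⟩ := (hmem a).mp haK
    obtain ⟨hx1a, hx1adj⟩ := (hmem x1).mp h1K
    obtain ⟨hx2a, hx2adj⟩ := (hmem x2).mp h2K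
    obtain ⟨hx3a, hx3adj⟩ := (hmem x3).mp h3K
    exact contains_sparkler H c (vv x1) (vv x2) (vv x3) (vv a) (vv (a-1)) (vv (a-2)) (vv (a-3))
      hx1adj hx2adj hx3adj haadj
      (by have := hvadj (a-1) (by omega); rw [show a-1+1 = a by omega] at this; exact this.symm)
      (by have := hvadj (a-2) (by omega); rw [show a-2+1 = a-1 by omega] at this; exact this.symm)
      (by have := hvadj (a-3) (by omega); rw [show a-3+1 = a-2 by omega] at this; exact this.symm)
      (hvne x1 x2 (by omega) (by omega) (by omega))
      (hvne x1 x3 (by omega) (by omega) (by omega))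
      (hvne x2 x3 (by omega) (by omega) (by omega))
      (hvne x1 a (by omega) (by omega) (by omega))
      (hvne x1 (a-1) (by omega) (by omega) (by omega))
      (hvne x1 (a-2) (by omega) (by omega) (by omega))
      (hvne x1 (a-3) (by omega) (by omega) (by omega))
      (hvne x2 a (by omega) (by omega) (by omega))
      (hvne x2 (a-1) (by omega) (by omega) (by omega))
      (hvne x2 (a-2) (by omega) (by omega) (by omega))
      (hvne x2 (a-3) (by omega) (by omega) (by omega))
      (hvne x3 a (by omega) (by omega) (by omega))
      (hvne x3 (a-1) (by omega) (by omega) (by omega))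
      (hvne x3 (a-2) (by omega) (by omega) (by omega))
      (hvne x3 (a-3) (by omega) (by omega) (by omega))
      (hvne a (a-1) (by omega) (by omega) (by omega))
      (hvne a (a-2) (by omega) (by omega) (by omega))
      (hvne a (a-3) (by omega) (by omega) (by omega))
      (hvne (a-1) (a-2) (by omega) (by omega) (by omega))
      (hvne (a-1) (a-3) (by omega) (by omega) (by omega))
      (hvne (a-2) (a-3) (by omega) (by omega) (by omega))
      (H.ne_of_adj haadj)
      (hnc (a-1) (by omega) (by omega)).symm
      (hnc (a-2) (by omega) (by omega)).symm
      (hnc (a-3) (by omega) (by omega)).symm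
  -- now the decision tree
  set M := Kf.max' hKne with hMdef
  set m := Kf.min' hKne with hmdef
  have hMK : M ∈ Kf := Kf.max'_mem hKne
  have hmK : m ∈ Kf := Kf.min'_mem hKne
  have hM14 : M ≤ 14 := ((hmem M).mp hMK).1
  have hm14 : m ≤ 14 := ((hmem m).mp hmK).1
  have hMle : ∀ p, p ∈ Kf → p ≤ M := fun p hp => Kf.le_max' p hp
  have hmle : ∀ p, p ∈ Kf → m ≤ p := fun p hp => Kf.min'_le p hp
  by_cases h1 : M + 3 ≤ 14
  · refine T1asc M hMK h1 ?_ ?_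
    · intro q hq1 hq2 hadj
      have := hMle q ((hmem q).mpr ⟨by omega, hadj⟩); omega
    · intro q hq1 hq2 hqc
      by_cases hq13 : q + 1 ≤ 14
      · have := hMle (q+1) ((hmem _).mpr ⟨by omega, hcvR q (by omega) hqc hq13⟩); omega
      · have := hMle (q-1) ((hmem _).mpr ⟨by omega, hcvL q (by omega) hqc (by omega)⟩); omega
  · by_cases h2 : 3 ≤ m
    · refine T1desc m hmK h2 ?_ ?_
      · intro q hq1 hq2 hadj
        have := hmle q ((hmem q).mpr ⟨by omega, hadj⟩); omega
      · intro q hq1 hq2 hqc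
        have hq14 : q ≤ 14 := by omega
        have h1' := hmle (q+1) ((hmem _).mpr ⟨by omega, hcvR q hq14 hqc (by omega)⟩)
        have h2' := hmle (q-1) ((hmem _).mpr ⟨by omega, hcvL q hq14 hqc (by omega)⟩)
        omega
    · -- m ≤ 2 and M ≥ 12
      have hM12 : 12 ≤ M := by omega
      have hm2 : m ≤ 2 := by omega
      set Af : Finset ℕ := Kf.filter (fun p => 3 ≤ p ∧ p ≤ 11) with hAfdef
      have hAmem : ∀ p, p ∈ Af ↔ p ∈ Kf ∧ 3 ≤ p ∧ p ≤ 11 := by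
        intro p; simp [hAfdef, Finset.mem_filter]
      by_cases hA : Af.Nonempty
      · set a := Af.max' hA with hadef
        have haA : a ∈ Af := Af.max'_mem hA
        obtain ⟨haK, ha3, ha11⟩ := (hAmem a).mp haA
        have hale : ∀ p, p ∈ Af → p ≤ a := fun p hp => Af.le_max' p hp
        by_cases ha8 : a ≤ 8
        · refine T1asc a haK (by omega) ?_ ?_
          · intro q hq1 hq2 hadj
            have := hale q ((hAmem q).mpr ⟨(hmem q).mpr ⟨by omega, hadj⟩, by omega, by omega⟩)
            omega
          · intro q hq1 hq2 hqc
            have hq14 : q ≤ 14 := by omega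
            have hL := hale (q-1) ((hAmem _).mpr
              ⟨(hmem _).mpr ⟨by omega, hcvL q hq14 hqc (by omega)⟩, by omega, by omega⟩)
            have hR := hale (q+1) ((hAmem _).mpr
              ⟨(hmem _).mpr ⟨by omega, hcvR q hq14 hqc (by omega)⟩, by omega, by omega⟩)
            omega
        · -- a ∈ [9, 11]
          have ha9 : 9 ≤ a := by omega
          set Bf : Finset ℕ := Kf.filter (fun p => a - 3 ≤ p ∧ p + 1 ≤ a) with hBfdef
          have hBmem : ∀ p, p ∈ Bf ↔ p ∈ Kf ∧ a - 3 ≤ p ∧ p + 1 ≤ a := by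
            intro p; simp [hBfdef, Finset.mem_filter]
          by_cases hB : Bf.Nonempty
          · obtain ⟨b, hbB⟩ := hB
            obtain ⟨hbK, hb1, hb2⟩ := (hBmem b).mp hbB
            by_cases hD : ∃ j, m ≤ j ∧ j ≤ m + 3 ∧ vv j = c
            · obtain ⟨j, hj1, hj2, hjc⟩ := hD
              have hjm : j ≠ m := by
                intro h
                exact H.ne_of_adj ((hmem m).mp hmK).2 (h ▸ hjc).symm
              have hj14 : j ≤ 14 := by omega
              have hwnc : ∀ q, a - 3 ≤ q → q + 1 ≤ a → vv q ≠ c := by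
                intro q hq1 hq2 hqc
                have := hvinj q j (by omega) hj14 (hqc.trans hjc.symm)
                omega
              by_cases hjm' : j - 1 = m
              · -- use x = j + 1
                have hj3 : j ≤ m + 3 := hj2
                have hxK : j + 1 ∈ Kf :=
                  (hmem _).mpr ⟨by omega, hcvR j hj14 hjc (by omega)⟩
                exact T2desc a m M (j+1) haK (by omega) hmK hMK hxK
                  (by omega) (by omega) (by omega)
                  (Or.inl (by omega)) (Or.inr (by omega)) (Or.inl (by omega)) hwnc
              · -- use x = j - 1
                have hxK : j - 1 ∈ Kf :=
                  (hmem _).mpr ⟨by omega, hcvL j hj14 hjc (by omega)⟩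
                exact T2desc a m M (j-1) haK (by omega) hmK hMK hxK
                  (by omega) (by omega) (by omega)
                  (Or.inl (by omega)) (Or.inr (by omega)) (Or.inl (by omega)) hwnc
            · -- window at m, leaves b a M
              refine T2asc m b a M hmK (by omega) hbK haK hMK
                (by omega) (by omega) (by omega)
                (Or.inr (by omega)) (Or.inr (by omega)) (Or.inr (by omega)) ?_
              intro q hq1 hq2 hqc
              exact hD ⟨q, by omega, by omega, hqc⟩
          · -- Bf empty: T1desc at a
            refine T1desc a haK (by omega) ?_ ?_
            · intro q hq1 hq2 hadj
              exact absurd ⟨q, (hBmem q).mpr ⟨(hmem q).mpr ⟨by omega, hadj⟩, hq1, hq2⟩⟩ hB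
            · intro q hq1 hq2 hqc
              have hq14 : q ≤ 14 := by omega
              have hL : q - 1 ∈ Kf :=
                (hmem _).mpr ⟨by omega, hcvL q hq14 hqc (by omega)⟩
              by_cases hqa : a - 3 ≤ q - 1
              · exact absurd ⟨q-1, (hBmem _).mpr ⟨hL, hqa, by omega⟩⟩ hB
              · -- q = a - 3
                have hR : q + 1 ∈ Kf :=
                  (hmem _).mpr ⟨by omega, hcvR q hq14 hqc (by omega)⟩
                exact absurd ⟨q+1, (hBmem _).mpr ⟨hR, by omega, by omega⟩⟩ hB
      · -- Af empty
        set Cf : Finset ℕ := Kf.filter (fun p => p ≤ 2) with hCfdef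
        have hCmem : ∀ p, p ∈ Cf ↔ p ∈ Kf ∧ p ≤ 2 := by
          intro p; simp [hCfdef, Finset.mem_filter]
        have hCne : Cf.Nonempty := ⟨m, (hCmem m).mpr ⟨hmK, hm2⟩⟩
        set a2 := Cf.max' hCne with ha2def
        obtain ⟨ha2K, ha2le⟩ := (hCmem a2).mp (Cf.max'_mem hCne)
        have ha2max : ∀ p, p ∈ Cf → p ≤ a2 := fun p hp => Cf.le_max' p hp
        have noA : ∀ q, q ∈ Kf → ¬(3 ≤ q ∧ q ≤ 11) := by
          intro q hq hcon
          exact hA ⟨q, (hAmem q).mpr ⟨hq, hcon.1, hcon.2⟩⟩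
        refine T1asc a2 ha2K (by omega) ?_ ?_
        · intro q hq1 hq2 hadj
          have hqK : q ∈ Kf := (hmem q).mpr ⟨by omega, hadj⟩
          by_cases hq3 : q ≤ 2
          · have := ha2max q ((hCmem q).mpr ⟨hqK, hq3⟩); omega
          · exact noA q hqK ⟨by omega, by omega⟩
        · intro q hq1 hq2 hqc
          have hq14 : q ≤ 14 := by omega
          have hRK : q + 1 ∈ Kf := (hmem _).mpr ⟨by omega, hcvR q hq14 hqc (by omega)⟩
          by_cases hq3 : q + 1 ≤ 2
          · have := ha2max (q+1) ((hCmem _).mpr ⟨hRK, hq3⟩); omega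
          · exact noA (q+1) hRK ⟨by omega, by omega⟩

end Core
/-- A connected graph containing `K_{1,4}` but no sparkler `S_{4,4}` contains no
path on 15 vertices. -/
theorem no_long_path_of_no_sparkler {V : Type} [Fintype V] (H : SimpleGraph V)
    (hconn : H.Connected)
    (hstar : Contains (starGraph 4) H)
    (hsp : ¬ Contains (sparkler 4 4) H) :
    ¬ Contains (SimpleGraph.pathGraph 15) H := by
  classical
  rintro ⟨g, hg⟩
  obtain ⟨f, hf⟩ := hstar
  apply hsp
  set c : V := f 0 with hcdef
  have hstaradj : ∀ i : Fin 5, i ≠ 0 → H.Adj c (f i) := by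
    intro i hi
    refine f.map_adj ?_
    rw [starGraph, SimpleGraph.fromRel_adj]
    exact ⟨Ne.symm hi, Or.inl rfl⟩
  have hn1 : H.Adj c (f 1) := hstaradj 1 (by decide)
  have hn2 : H.Adj c (f 2) := hstaradj 2 (by decide)
  have hn3 : H.Adj c (f 3) := hstaradj 3 (by decide)
  have hn4 : H.Adj c (f 4) := hstaradj 4 (by decide)
  have d12 : f 1 ≠ f 2 := hf.ne (by decide)
  have d13 : f 1 ≠ f 3 := hf.ne (by decide)
  have d14 : f 1 ≠ f 4 := hf.ne (by decide)
  have d23 : f 2 ≠ f 3 := hf.ne (by decide)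
  have d24 : f 2 ≠ f 4 := hf.ne (by decide)
  have d34 : f 3 ≠ f 4 := hf.ne (by decide)
  -- the path as an ℕ-indexed family
  set vv : ℕ → V := fun p => g ⟨p % 15, Nat.mod_lt _ (by norm_num)⟩ with hvvdef
  have hvv14 : ∀ p, (hp : p ≤ 14) → vv p = g ⟨p, by omega⟩ := by
    intro p hp
    simp only [hvvdef]
    congr 1
    exact Fin.ext (by simp [Nat.mod_eq_of_lt (by omega : p < 15)])
  have hvinj : ∀ p q, p ≤ 14 → q ≤ 14 → vv p = vv q → p = q := by
    intro p q hp hq h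
    rw [hvv14 p hp, hvv14 q hq] at h
    have := congrArg Fin.val (hg h)
    simpa using this
  have hvadj : ∀ p, p + 1 ≤ 14 → H.Adj (vv p) (vv (p + 1)) := by
    intro p hp
    rw [hvv14 p (by omega), hvv14 (p+1) (by omega)]
    refine g.map_adj ?_
    rw [SimpleGraph.pathGraph_adj]
    left
    simp
  have hcvL : ∀ p, p ≤ 14 → vv p = c → 1 ≤ p → H.Adj c (vv (p - 1)) := by
    intro p hp hpc h1
    rw [← hpc]
    have := hvadj (p-1) (by omega)
    rw [show p - 1 + 1 = p by omega] at this
    exact this.symm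
  have hcvR : ∀ p, p ≤ 14 → vv p = c → p + 1 ≤ 14 → H.Adj c (vv (p + 1)) := by
    intro p hp hpc h1
    rw [← hpc]
    exact hvadj p h1
  by_cases hcin : ∃ j : Fin 15, g j = c
  · obtain ⟨j, hj⟩ := hcin
    have hj14 : (j : ℕ) ≤ 14 := by omega
    have hjc : vv (j : ℕ) = c := by
      rw [hvv14 _ hj14]
      rw [← hj]
    refine core H c vv (f 1) (f 2) (f 3) (f 4) hn1 hn2 hn3 hn4
      d12 d13 d14 d23 d24 d34 hvinj hvadj hcvL hcvR ?_
    by_cases hj13 : (j : ℕ) + 1 ≤ 14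
    · exact ⟨(j : ℕ) + 1, by omega, hcvR _ hj14 hjc hj13⟩
    · exact ⟨(j : ℕ) - 1, by omega, hcvL _ hj14 hjc (by omega)⟩
  · have hnotin : ∀ p, p ≤ 14 → vv p ≠ c := by
      intro p hp h
      exact hcin ⟨⟨p, by omega⟩, by rw [← hvv14 p hp]; exact h⟩
    obtain ⟨k0, hk0mem, hk0min⟩ :=
      Finset.exists_min_image (Finset.range 15) (fun k => H.dist c (vv k)) ⟨0, by simp⟩
    have hk014 : k0 ≤ 14 := by
      have := Finset.mem_range.mp hk0mem; omega
    set D := H.dist c (vv k0) with hDdef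
    have hD0 : D ≠ 0 := by
      intro h
      exact hnotin k0 hk014 (hconn.dist_eq_zero_iff.mp h).symm
    by_cases hD1 : D = 1
    · refine core H c vv (f 1) (f 2) (f 3) (f 4) hn1 hn2 hn3 hn4
        d12 d13 d14 d23 d24 d34 hvinj hvadj hcvL hcvR ?_
      exact ⟨k0, hk014, SimpleGraph.dist_eq_one_iff_adj.mp hD1⟩
    · have hD2 : 2 ≤ D := by omega
      have hdall : ∀ k, k ≤ 14 → D ≤ H.dist c (vv k) := by
        intro k hk
        exact hk0min k (Finset.mem_range.mpr (by omega))
      have hnadjv : ∀ k, k ≤ 14 → ¬ H.Adj c (vv k) := by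
        intro k hk hadj
        have h1 : H.dist c (vv k) = 1 := SimpleGraph.dist_eq_one_iff_adj.mpr hadj
        have := hdall k hk
        omega
      obtain ⟨w, hwlen⟩ := hconn.exists_walk_length_eq_dist c (vv k0)
      set gV : ℕ → V := fun i => w.getVert i with hgVdef
      have hadjW : ∀ i, i < D → H.Adj (gV i) (gV (i + 1)) := by
        intro i hi
        exact w.adj_getVert_succ (by omega)
      have hgV0 : gV 0 = c := by simp [hgVdef]
      have hgVD : gV D = vv k0 := by
        have := SimpleGraph.Walk.getVert_length w
        rw [hwlen] at this
        simpa [hgVdef] using this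
      have hup : ∀ i, i ≤ D → H.dist c (gV i) ≤ i := by
        intro i
        induction i with
        | zero => intro _; simp [hgV0, SimpleGraph.dist_self]
        | succ n ih =>
          intro h
          have h1 := ih (by omega)
          have h2 : H.dist (gV n) (gV (n+1)) = 1 :=
            SimpleGraph.dist_eq_one_iff_adj.mpr (hadjW n (by omega))
          have h3 := hconn.dist_triangle (u := c) (v := gV n) (w := gV (n+1))
          omega
      have hdown : ∀ i, i ≤ D → H.dist (gV (D - i)) (vv k0) ≤ i := by
        intro i
        induction i with
        | zero =>
          intro _
          rw [show D - 0 = D by omega, hgVD]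
          simp [SimpleGraph.dist_self]
        | succ n ih =>
          intro h
          have h1 := ih (by omega)
          have hadj : H.Adj (gV (D - (n+1))) (gV (D - n)) := by
            have := hadjW (D - (n+1)) (by omega)
            rwa [show D - (n+1) + 1 = D - n by omega] at this
          have h2 : H.dist (gV (D - (n+1))) (gV (D - n)) = 1 :=
            SimpleGraph.dist_eq_one_iff_adj.mpr hadj
          have h3 := hconn.dist_triangle (u := gV (D - (n+1))) (v := gV (D - n)) (w := vv k0)
          omega
      have hdown' : ∀ i, i ≤ D → H.dist (gV i) (vv k0) ≤ D - i := by
        intro i hi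
        have := hdown (D - i) (by omega)
        rwa [show D - (D - i) = i by omega] at this
      have hdist : ∀ i, i ≤ D → H.dist c (gV i) = i := by
        intro i hi
        have h1 := hup i hi
        have h2 := hdown' i hi
        have h3 := hconn.dist_triangle (u := c) (v := gV i) (w := vv k0)
        omega
      have hgne : ∀ i j, i ≤ D → j ≤ D → i ≠ j → gV i ≠ gV j := by
        intro i j hi hj hne h
        have h1 := hdist i hi
        have h2 := hdist j hj
        rw [h] at h1
        omega
      have hgnc : ∀ i, 1 ≤ i → i ≤ D → gV i ≠ c := by
        intro i h1 h2 h
        have := hdist i h2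
        rw [h] at this
        simp [SimpleGraph.dist_self] at this
        omega
      have hgnadj : ∀ i, 2 ≤ i → i ≤ D → ¬ H.Adj c (gV i) := by
        intro i h1 h2 hadj
        have ha : H.dist c (gV i) = 1 := SimpleGraph.dist_eq_one_iff_adj.mpr hadj
        have := hdist i h2
        omega
      have hgnotv : ∀ i, i < D → ∀ k, k ≤ 14 → gV i ≠ vv k := by
        intro i hi k hk h
        have h1 := hdist i (by omega)
        have h2 := hdall k hk
        rw [h] at h1
        omega
      have hadj0 : H.Adj c (gV 1) := by
        have := hadjW 0 (by omega)
        rwa [hgV0] at this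
      by_cases hD4 : 4 ≤ D
      · exact sparkler_of_nonadj_tail H c (f 1) (f 2) (f 3) (f 4) (gV 1) (gV 2) (gV 3) (gV 4)
          hn1 hn2 hn3 hn4 d12 d13 d14 d23 d24 d34
          hadj0 (hadjW 1 (by omega)) (hadjW 2 (by omega)) (hadjW 3 (by omega))
          (hgne 1 2 (by omega) (by omega) (by omega))
          (hgne 1 3 (by omega) (by omega) (by omega))
          (hgne 1 4 (by omega) (by omega) (by omega))
          (hgne 2 3 (by omega) (by omega) (by omega))
          (hgne 2 4 (by omega) (by omega) (by omega))
          (hgne 3 4 (by omega) (by omega) (by omega))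
          (hgnc 1 (by omega) (by omega)).symm
          (hgnc 2 (by omega) (by omega)).symm
          (hgnc 3 (by omega) (by omega)).symm
          (hgnc 4 (by omega) (by omega)).symm
          (hgnadj 2 (by omega) (by omega))
          (hgnadj 3 (by omega) (by omega))
          (hgnadj 4 (by omega) (by omega))
      · by_cases hD3 : D = 3
        · have hg3 : gV 3 = vv k0 := by rw [← hD3]; exact hgVD
          by_cases hk13 : k0 + 1 ≤ 14
          · exact sparkler_of_nonadj_tail H c (f 1) (f 2) (f 3) (f 4)
              (gV 1) (gV 2) (vv k0) (vv (k0+1))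
              hn1 hn2 hn3 hn4 d12 d13 d14 d23 d24 d34
              hadj0 (hadjW 1 (by omega))
              (by rw [← hg3]; exact hadjW 2 (by omega))
              (hvadj k0 hk13)
              (hgne 1 2 (by omega) (by omega) (by omega))
              (hgnotv 1 (by omega) k0 hk014)
              (hgnotv 1 (by omega) (k0+1) (by omega))
              (hgnotv 2 (by omega) k0 hk014)
              (hgnotv 2 (by omega) (k0+1) (by omega))
              (fun h => by have := hvinj k0 (k0+1) hk014 (by omega) h; omega)
              (hgnc 1 (by omega) (by omega)).symm
              (hgnc 2 (by omega) (by omega)).symm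
              (fun h => hnotin k0 hk014 h.symm)
              (fun h => hnotin (k0+1) (by omega) h.symm)
              (hgnadj 2 (by omega) (by omega))
              (hnadjv k0 hk014)
              (hnadjv (k0+1) (by omega))
          · -- k0 = 14
            have hk02 : 1 ≤ k0 := by omega
            exact sparkler_of_nonadj_tail H c (f 1) (f 2) (f 3) (f 4)
              (gV 1) (gV 2) (vv k0) (vv (k0-1))
              hn1 hn2 hn3 hn4 d12 d13 d14 d23 d24 d34
              hadj0 (hadjW 1 (by omega))
              (by rw [← hg3]; exact hadjW 2 (by omega))
              (by
                have := hvadj (k0-1) (by omega)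
                rw [show k0 - 1 + 1 = k0 by omega] at this
                exact this.symm)
              (hgne 1 2 (by omega) (by omega) (by omega))
              (hgnotv 1 (by omega) k0 hk014)
              (hgnotv 1 (by omega) (k0-1) (by omega))
              (hgnotv 2 (by omega) k0 hk014)
              (hgnotv 2 (by omega) (k0-1) (by omega))
              (fun h => by have := hvinj k0 (k0-1) hk014 (by omega) h; omega)
              (hgnc 1 (by omega) (by omega)).symm
              (hgnc 2 (by omega) (by omega)).symm
              (fun h => hnotin k0 hk014 h.symm)
              (fun h => hnotin (k0-1) (by omega) h.symm)
              (hgnadj 2 (by omega) (by omega))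
              (hnadjv k0 hk014)
              (hnadjv (k0-1) (by omega))
        · -- D = 2
          have hD2' : D = 2 := by omega
          have hg2 : gV 2 = vv k0 := by rw [← hD2']; exact hgVD
          by_cases hk12 : k0 + 2 ≤ 14
          · exact sparkler_of_nonadj_tail H c (f 1) (f 2) (f 3) (f 4)
              (gV 1) (vv k0) (vv (k0+1)) (vv (k0+2))
              hn1 hn2 hn3 hn4 d12 d13 d14 d23 d24 d34
              hadj0
              (by rw [← hg2]; exact hadjW 1 (by omega))
              (hvadj k0 (by omega))
              (by
                have := hvadj (k0+1) (by omega)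
                rwa [show k0 + 1 + 1 = k0 + 2 by omega] at this)
              (hgnotv 1 (by omega) k0 hk014)
              (hgnotv 1 (by omega) (k0+1) (by omega))
              (hgnotv 1 (by omega) (k0+2) (by omega))
              (fun h => by have := hvinj k0 (k0+1) hk014 (by omega) h; omega)
              (fun h => by have := hvinj k0 (k0+2) hk014 (by omega) h; omega)
              (fun h => by have := hvinj (k0+1) (k0+2) (by omega) (by omega) h; omega)
              (hgnc 1 (by omega) (by omega)).symm
              (fun h => hnotin k0 hk014 h.symm)
              (fun h => hnotin (k0+1) (by omega) h.symm)
              (fun h => hnotin (k0+2) (by omega) h.symm)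
              (hnadjv k0 hk014)
              (hnadjv (k0+1) (by omega))
              (hnadjv (k0+2) (by omega))
          · -- k0 ≥ 13, use descending
            have hk02 : 2 ≤ k0 := by omega
            exact sparkler_of_nonadj_tail H c (f 1) (f 2) (f 3) (f 4)
              (gV 1) (vv k0) (vv (k0-1)) (vv (k0-2))
              hn1 hn2 hn3 hn4 d12 d13 d14 d23 d24 d34
              hadj0
              (by rw [← hg2]; exact hadjW 1 (by omega))
              (by
                have := hvadj (k0-1) (by omega)
                rw [show k0 - 1 + 1 = k0 by omega] at this
                exact this.symm)
              (by
                have := hvadj (k0-2) (by omega)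
                rw [show k0 - 2 + 1 = k0 - 1 by omega] at this
                exact this.symm)
              (hgnotv 1 (by omega) k0 hk014)
              (hgnotv 1 (by omega) (k0-1) (by omega))
              (hgnotv 1 (by omega) (k0-2) (by omega))
              (fun h => by have := hvinj k0 (k0-1) hk014 (by omega) h; omega)
              (fun h => by have := hvinj k0 (k0-2) hk014 (by omega) h; omega)
              (fun h => by have := hvinj (k0-1) (k0-2) (by omega) (by omega) h; omega)
              (hgnc 1 (by omega) (by omega)).symm
              (fun h => hnotin k0 hk014 h.symm)
              (fun h => hnotin (k0-1) (by omega) h.symm)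
              (fun h => hnotin (k0-2) (by omega) h.symm)
              (hnadjv k0 hk014)
              (hnadjv (k0-1) (by omega))
              (hnadjv (k0-2) (by omega))
end
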